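/- arXiv:2101.06546 — 6 statements merged into one kernel-verified Lean document; each statement's English description precedes it below -/
import Mathlib

section
/- For every graph G without isolated vertices, the restrained domination number satisfies γ_r(G) ≤ γ_{rI}(G) ≤ 2·γ_r(G), where γ_{rI} is the restrained Italian domination number. -/
open SimpleGraph Finset

variable {V : Type*} [Fintype V]

/-- D is a restrained dominating set of G. -/
def IsRDS (G : SimpleGraph V) (D : Set V) : Prop :=
  ∀ v, v ∉ D → (∃ u ∈ D, G.Adj v u) ∧ ∃ u, u ∉ D ∧ G.Adj v u

/-- The restrained domination number γ_r(G). -/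
noncomputable def rdn (G : SimpleGraph V) : ℕ :=
  sInf {n | ∃ D : Set V, IsRDS G D ∧ D.ncard = n}

open Classical in
/-- f is a restrained Italian dominating function on G. -/
def IsRIDF (G : SimpleGraph V) (f : V → ℕ) : Prop :=
  (∀ v, f v ≤ 2) ∧
  (∀ v, f v = 0 → 2 ≤ ∑ u ∈ Finset.univ.filter (fun u => G.Adj v u), f u) ∧
  (∀ v, f v = 0 → ∃ u, G.Adj v u ∧ f u = 0)

/-- The restrained Italian domination number γ_{rI}(G). -/
noncomputable def ridn (G : SimpleGraph V) : ℕ :=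
  sInf {n | ∃ f : V → ℕ, IsRIDF G f ∧ ∑ v, f v = n}

/-!
The positive-weight vertices of a restrained Italian dominating function form a restrained
dominating set, of size at most the weight; conversely, weight `2` on a restrained dominating
set and `0` elsewhere is a restrained Italian dominating function.
-/

theorem Set.sum_indicator_const_eq_ncard_mul {α : Type*} [Fintype α] (s : Set α) (c : ℕ) :
    ∑ a, s.indicator (fun _ => c) a = s.ncard * c := by
  classical
  simp [Set.indicator_apply, Finset.sum_ite, Set.ncard_eq_toFinset_card']

theorem Function.ncard_support_le_sum {α : Type*} [Fintype α] (f : α → ℕ) :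
    (Function.support f).ncard ≤ ∑ a, f a := by
  classical
  rw [Set.ncard_eq_toFinset_card', ← Finset.sum_filter_ne_zero]
  simpa using Finset.card_nsmul_le_sum (univ.filter (f · ≠ 0)) f 1
    fun a ha => Nat.one_le_iff_ne_zero.mpr (mem_filter.mp ha).2

namespace SimpleGraph

set_option linter.unusedSectionVars false

variable {G : SimpleGraph V}

theorem isRDS_univ (G : SimpleGraph V) : IsRDS G Set.univ :=
  fun v hv => absurd (Set.mem_univ v) hv

theorem isRIDF_const_two (G : SimpleGraph V) : IsRIDF G fun _ => 2 :=
  ⟨fun _ => le_rfl, fun _ hv => absurd hv two_ne_zero, fun _ hv => absurd hv two_ne_zero⟩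

theorem rdn_le_ncard {D : Set V} (hD : IsRDS G D) : rdn G ≤ D.ncard :=
  Nat.sInf_le ⟨D, hD, rfl⟩

theorem ridn_le_sum {f : V → ℕ} (hf : IsRIDF G f) : ridn G ≤ ∑ v, f v :=
  Nat.sInf_le ⟨f, hf, rfl⟩

theorem exists_isRDS_ncard_eq_rdn (G : SimpleGraph V) : ∃ D, IsRDS G D ∧ D.ncard = rdn G :=
  Nat.sInf_mem (s := {n | ∃ D : Set V, IsRDS G D ∧ D.ncard = n}) ⟨_, _, isRDS_univ G, rfl⟩

theorem exists_isRIDF_sum_eq_ridn (G : SimpleGraph V) :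
    ∃ f, IsRIDF G f ∧ ∑ v, f v = ridn G :=
  Nat.sInf_mem (s := {n | ∃ f : V → ℕ, IsRIDF G f ∧ ∑ v, f v = n})
    ⟨_, _, isRIDF_const_two G, rfl⟩

theorem IsRIDF.isRDS_support {f : V → ℕ} (hf : IsRIDF G f) : IsRDS G (Function.support f) := by
  classical
  intro v hv
  rw [Function.notMem_support] at hv
  refine ⟨?_, ?_⟩
  · by_contra! hdom
    have hzero : ∑ u ∈ univ.filter (G.Adj v ·), f u = 0 :=
      sum_eq_zero fun u hu => Function.notMem_support.mp fun hu' => hdom u hu' (mem_filter.mp hu).2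
    have := hf.2.1 v hv
    omega
  · obtain ⟨u, hadj, hu⟩ := hf.2.2 v hv
    exact ⟨u, Function.notMem_support.mpr hu, hadj⟩

theorem IsRDS.isRIDF_indicator {D : Set V} (hD : IsRDS G D) :
    IsRIDF G (D.indicator fun _ => 2) := by
  classical
  have hmem {v} (hv : D.indicator (fun _ => 2) v = 0) : v ∉ D := fun hvD => by
    simp [Set.indicator_of_mem hvD] at hv
  refine ⟨fun v => ?_, fun v hv => ?_, fun v hv => ?_⟩
  · by_cases hv : v ∈ D <;> simp [hv]
  · obtain ⟨u, huD, hadj⟩ := (hD v (hmem hv)).1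
    calc 2 = D.indicator (fun _ => 2) u := (Set.indicator_of_mem huD (fun _ => 2)).symm
      _ ≤ ∑ w ∈ univ.filter (G.Adj v ·), D.indicator (fun _ => 2) w :=
        single_le_sum (fun _ _ => Nat.zero_le _) (mem_filter.mpr ⟨mem_univ u, hadj⟩)
  · obtain ⟨u, huD, hadj⟩ := (hD v (hmem hv)).2
    exact ⟨u, hadj, Set.indicator_of_notMem huD _⟩

end SimpleGraph

theorem restrained_italian_bounds_general (G : SimpleGraph V) :
    rdn G ≤ ridn G ∧ ridn G ≤ 2 * rdn G := by
  constructor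
  · obtain ⟨f, hf, hsum⟩ := exists_isRIDF_sum_eq_ridn G
    calc rdn G ≤ (Function.support f).ncard := rdn_le_ncard hf.isRDS_support
      _ ≤ ∑ v, f v := Function.ncard_support_le_sum f
      _ = ridn G := hsum
  · obtain ⟨D, hD, hcard⟩ := exists_isRDS_ncard_eq_rdn G
    calc ridn G ≤ ∑ v, D.indicator (fun _ => 2) v := ridn_le_sum hD.isRIDF_indicator
      _ = 2 * rdn G := by rw [Set.sum_indicator_const_eq_ncard_mul, hcard, mul_comm]

/-- For every graph `G` without isolated vertices, γ_r(G) ≤ γ_{rI}(G) ≤ 2 γ_r(G). -/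
theorem restrained_italian_bounds (G : SimpleGraph V) (h : ∀ v : V, ∃ u, G.Adj v u) :
    rdn G ≤ ridn G ∧ ridn G ≤ 2 * rdn G :=
  restrained_italian_bounds_general G
end

section
/- For the double star DS_{r,s} with r, s ≥ 2, the restrained domination number equals r + s (the set of all leaves is the unique minimum restrained dominating set), and γ_{rI}(DS_{r,s}) = γ_r(DS_{r,s}) = r + s. -/
/-!
A leaf lies in every restrained dominating set: otherwise its unique neighbour would have to be
both inside and outside the set. Likewise a restrained Italian dominating function is positive on
every leaf, since a leaf of value 0 would need its unique neighbour to carry both value 0 and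
value at least 2. So both parameters of DS_{r,s} are at least its number r + s of leaves.
Conversely, each centre has at least two leaf neighbours and the other centre as a non-leaf
neighbour, so the leaves form a restrained dominating set and their indicator is a restrained
Italian dominating function.
-/

open SimpleGraph Finset

variable {V : Type*} [Fintype V]

/-- The double star DS_{r,s}: centers `Sum.inl none` and `Sum.inr none` are adjacent,
the first having r leaves and the second s leaves. -/
def doubleStar (r s : ℕ) : SimpleGraph (Option (Fin r) ⊕ Option (Fin s)) :=
  SimpleGraph.fromRel (fun a b =>
    (a = Sum.inl none ∧ b = Sum.inr none) ∨
    (∃ i, a = Sum.inl none ∧ b = Sum.inl (some i)) ∨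
    (∃ j, a = Sum.inr none ∧ b = Sum.inr (some j)))

section General

variable {G : SimpleGraph V}

theorem IsRDS.mem_of_adj_iff {W : Type*} {H : SimpleGraph W} {D : Set W} (hD : IsRDS H D)
    {v c : W} (hv : ∀ u, H.Adj v u ↔ u = c) : v ∈ D := by
  by_contra hvD
  obtain ⟨⟨u, huD, hvu⟩, w, hwD, hvw⟩ := hD v hvD
  rw [hv] at hvu hvw
  subst hvu hvw
  exact hwD huD

theorem rdn_eq_ncard_of_forall_subset {S : Set V} (hS : IsRDS G S)
    (hmin : ∀ D, IsRDS G D → S ⊆ D) : rdn G = S.ncard :=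
  IsLeast.csInf_eq ⟨⟨S, hS, rfl⟩, by
    rintro _ ⟨D, hD, rfl⟩
    exact Set.ncard_le_ncard (hmin D hD)⟩

theorem IsRIDF.one_le_of_adj_iff {f : V → ℕ} (hf : IsRIDF G f) {v c : V}
    (hv : ∀ u, G.Adj v u ↔ u = c) : 1 ≤ f v := by
  by_contra! hv0
  rw [Nat.lt_one_iff] at hv0
  obtain ⟨u, hvu, hu0⟩ := hf.2.2 v hv0
  have hsum := hf.2.1 v hv0
  rw [hv] at hvu
  subst hvu
  classical
  have hN : Finset.univ.filter (G.Adj v ·) = {u} := by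
    ext; simp [hv]
  rw [hN, Finset.sum_singleton, hu0] at hsum
  omega

theorem IsRIDF.ncard_le_sum {f : V → ℕ} (hf : IsRIDF G f) {S : Set V}
    (hS : ∀ v ∈ S, ∃ c, ∀ u, G.Adj v u ↔ u = c) : S.ncard ≤ ∑ v, f v := by
  classical
  calc S.ncard = ∑ _v ∈ S.toFinset, 1 := by simp [Set.ncard_eq_toFinset_card']
    _ ≤ ∑ v ∈ S.toFinset, f v := Finset.sum_le_sum fun v hv => by
      obtain ⟨c, hc⟩ := hS v (Set.mem_toFinset.1 hv)
      exact hf.one_le_of_adj_iff hc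
    _ ≤ ∑ v, f v := Finset.sum_le_sum_of_subset (Finset.subset_univ _)

theorem isRIDF_indicator {D : Set V}
    (htwo : ∀ v ∉ D, ∃ a ∈ D, ∃ b ∈ D, a ≠ b ∧ G.Adj v a ∧ G.Adj v b)
    (hout : ∀ v ∉ D, ∃ u ∉ D, G.Adj v u) : IsRIDF G (D.indicator 1) := by
  classical
  refine ⟨fun v => ?_, fun v hv => ?_, fun v hv => ?_⟩
  · by_cases hv : v ∈ D <;> simp [hv]
  · obtain ⟨a, haD, b, hbD, hab, hva, hvb⟩ := htwo v (by simpa using hv)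
    calc 2 = ∑ u ∈ {a, b}, D.indicator 1 u := by simp [Finset.sum_pair hab, haD, hbD]
      _ ≤ _ := Finset.sum_le_sum_of_subset (by simp [Finset.insert_subset_iff, hva, hvb])
  · obtain ⟨u, huD, hvu⟩ := hout v (by simpa using hv)
    exact ⟨u, hvu, by simp [huD]⟩

theorem sum_indicator_one_eq_ncard (D : Set V) : ∑ v, D.indicator 1 v = D.ncard := by
  classical
  simp [Set.indicator_apply, Finset.sum_boole, Set.ncard_eq_toFinset_card']

theorem ridn_eq_ncard_of_forall_adj_iff {S : Set V}
    (hS : ∀ v ∈ S, ∃ c, ∀ u, G.Adj v u ↔ u = c)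
    (htwo : ∀ v ∉ S, ∃ a ∈ S, ∃ b ∈ S, a ≠ b ∧ G.Adj v a ∧ G.Adj v b)
    (hout : ∀ v ∉ S, ∃ u ∉ S, G.Adj v u) : ridn G = S.ncard :=
  IsLeast.csInf_eq ⟨⟨_, isRIDF_indicator htwo hout, sum_indicator_one_eq_ncard S⟩, by
    rintro _ ⟨f, hf, rfl⟩
    exact hf.ncard_le_sum hS⟩

end General

section DoubleStar

variable {r s : ℕ}

def doubleStarLeaves (r s : ℕ) : Set (Option (Fin r) ⊕ Option (Fin s)) :=
  {x | x ≠ Sum.inl none ∧ x ≠ Sum.inr none}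

theorem doubleStar_adj_centers : (doubleStar r s).Adj (Sum.inl none) (Sum.inr none) := by
  simp [doubleStar]

theorem doubleStar_adj_inl_none_inl_some (i : Fin r) :
    (doubleStar r s).Adj (Sum.inl none) (Sum.inl (some i)) := by
  simp [doubleStar]

theorem doubleStar_adj_inr_none_inr_some (j : Fin s) :
    (doubleStar r s).Adj (Sum.inr none) (Sum.inr (some j)) := by
  simp [doubleStar]

theorem doubleStar_adj_inl_some_iff (i : Fin r) (u : Option (Fin r) ⊕ Option (Fin s)) :
    (doubleStar r s).Adj (Sum.inl (some i)) u ↔ u = Sum.inl none := by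
  rcases u with (_ | k) | (_ | k) <;> simp [doubleStar]

theorem doubleStar_adj_inr_some_iff (j : Fin s) (u : Option (Fin r) ⊕ Option (Fin s)) :
    (doubleStar r s).Adj (Sum.inr (some j)) u ↔ u = Sum.inr none := by
  rcases u with (_ | k) | (_ | k) <;> simp [doubleStar]

theorem exists_doubleStar_adj_iff_of_mem_leaves {x : Option (Fin r) ⊕ Option (Fin s)}
    (hx : x ∈ doubleStarLeaves r s) : ∃ c, ∀ u, (doubleStar r s).Adj x u ↔ u = c := by
  obtain ⟨hl, hr⟩ := hx
  rcases x with (_ | i) | (_ | j)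
  · exact absurd rfl hl
  · exact ⟨_, doubleStar_adj_inl_some_iff i⟩
  · exact absurd rfl hr
  · exact ⟨_, doubleStar_adj_inr_some_iff j⟩

theorem doubleStar_exists_two_leaves_adj (hr : 2 ≤ r) (hs : 2 ≤ s)
    {v : Option (Fin r) ⊕ Option (Fin s)} (hv : v ∉ doubleStarLeaves r s) :
    ∃ a ∈ doubleStarLeaves r s, ∃ b ∈ doubleStarLeaves r s,
      a ≠ b ∧ (doubleStar r s).Adj v a ∧ (doubleStar r s).Adj v b := by
  simp only [doubleStarLeaves, Set.mem_ofPred_eq, not_and_or, not_not] at hv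
  rcases hv with rfl | rfl
  · exact ⟨Sum.inl (some ⟨0, by omega⟩), by simp [doubleStarLeaves],
      Sum.inl (some ⟨1, by omega⟩), by simp [doubleStarLeaves], by simp,
      doubleStar_adj_inl_none_inl_some _, doubleStar_adj_inl_none_inl_some _⟩
  · exact ⟨Sum.inr (some ⟨0, by omega⟩), by simp [doubleStarLeaves],
      Sum.inr (some ⟨1, by omega⟩), by simp [doubleStarLeaves], by simp,
      doubleStar_adj_inr_none_inr_some _, doubleStar_adj_inr_none_inr_some _⟩

theorem doubleStar_exists_center_adj {v : Option (Fin r) ⊕ Option (Fin s)}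
    (hv : v ∉ doubleStarLeaves r s) : ∃ u ∉ doubleStarLeaves r s, (doubleStar r s).Adj v u := by
  simp only [doubleStarLeaves, Set.mem_ofPred_eq, not_and_or, not_not] at hv
  rcases hv with rfl | rfl
  · exact ⟨Sum.inr none, by simp [doubleStarLeaves], doubleStar_adj_centers⟩
  · exact ⟨Sum.inl none, by simp [doubleStarLeaves], doubleStar_adj_centers.symm⟩

theorem isRDS_doubleStarLeaves (hr : 2 ≤ r) (hs : 2 ≤ s) :
    IsRDS (doubleStar r s) (doubleStarLeaves r s) := fun _ hv =>
  let ⟨a, ha, _, _, _, hva, _⟩ := doubleStar_exists_two_leaves_adj hr hs hv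
  ⟨⟨a, ha, hva⟩, doubleStar_exists_center_adj hv⟩

theorem ncard_doubleStarLeaves : (doubleStarLeaves r s).ncard = r + s := by
  have hcompl : doubleStarLeaves r s = {Sum.inl none, Sum.inr none}ᶜ := by
    ext x; simp [doubleStarLeaves, not_or]
  rw [hcompl, Set.ncard_compl, Set.ncard_pair (by simp)]
  simp only [Nat.card_eq_fintype_card, Fintype.card_sum, Fintype.card_option, Fintype.card_fin]
  omega

end DoubleStar

/-- For the double star DS_{r,s} with r, s ≥ 2: γ_r = r + s, γ_{rI} = r + s, and the
set of all r + s leaves is the unique minimum restrained dominating set. -/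
theorem doubleStar_rdn_ridn (r s : ℕ) (hr : 2 ≤ r) (hs : 2 ≤ s) :
    rdn (doubleStar r s) = r + s ∧
    ridn (doubleStar r s) = r + s ∧
    IsRDS (doubleStar r s) {x | x ≠ Sum.inl none ∧ x ≠ Sum.inr none} ∧
    (∀ D : Set (Option (Fin r) ⊕ Option (Fin s)), IsRDS (doubleStar r s) D →
      D.ncard = r + s → D = {x | x ≠ Sum.inl none ∧ x ≠ Sum.inr none}) := by
  have hleaf : ∀ x ∈ doubleStarLeaves r s, ∃ c, ∀ u, (doubleStar r s).Adj x u ↔ u = c :=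
    fun _ => exists_doubleStar_adj_iff_of_mem_leaves
  have hmin : ∀ D, IsRDS (doubleStar r s) D → doubleStarLeaves r s ⊆ D := fun _ hD x hx =>
    let ⟨_, hc⟩ := hleaf x hx
    hD.mem_of_adj_iff hc
  have hRDS := isRDS_doubleStarLeaves hr hs
  refine ⟨?_, ?_, hRDS, fun D hD hcard => ?_⟩
  · rw [rdn_eq_ncard_of_forall_subset hRDS hmin, ncard_doubleStarLeaves]
  · rw [ridn_eq_ncard_of_forall_adj_iff hleaf (fun _ => doubleStar_exists_two_leaves_adj hr hs)
      (fun _ => doubleStar_exists_center_adj), ncard_doubleStarLeaves]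
  · exact (Set.eq_of_subset_of_ncard_le (hmin D hD) (by rw [hcard, ncard_doubleStarLeaves])).symm
end

section
/- Let G be a graph and f = (V_0, V_1, V_2) a restrained Italian dominating function of G of minimum weight. If γ_{rI}(G) = γ_r(G), then V_2 = ∅ and V_1 is a restrained dominating set of G. -/
open SimpleGraph Finset

variable {V : Type*} [Fintype V]

/-!
The support of an RIDF is a restrained dominating set, so
`γ_r(G) ≤ |V₁| + |V₂| ≤ |V₁| + 2|V₂| = γ_{rI}(G)`. Equality of the two parameters forces
`|V₂| = 0`, and then `V₁` is the support of `f`.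
-/

lemma le_one_of_sum_le_card_support (f : V → ℕ) (h : ∑ v, f v ≤ #{v | f v ≠ 0}) (v : V) :
    f v ≤ 1 := by
  rw [card_filter] at h
  have hind : ∀ v ∈ univ, (if f v ≠ 0 then 1 else 0) ≤ f v := fun v _ => by split_ifs <;> omega
  have heq := (sum_eq_sum_iff_of_le hind).mp (le_antisymm (sum_le_sum hind) h) v (mem_univ v)
  split_ifs at heq <;> omega

lemma IsRIDF.isRDS_support {G : SimpleGraph V} {f : V → ℕ} (hf : IsRIDF G f) :
    IsRDS G {v | f v ≠ 0} := by
  classical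
  obtain ⟨-, hweight, hzero⟩ := hf
  intro v hv
  have hv : f v = 0 := not_not.mp hv
  constructor
  · obtain ⟨u, hu, hfu⟩ := exists_ne_zero_of_sum_ne_zero
      (zero_lt_two.trans_le (hweight v hv)).ne'
    exact ⟨u, hfu, (mem_filter.mp hu).2⟩
  · obtain ⟨u, hadj, hfu⟩ := hzero v hv
    exact ⟨u, not_not.mpr hfu, hadj⟩

/-- If f is a minimum-weight RIDF of G and γ_{rI}(G) = γ_r(G), then V₂ = ∅ and V₁ is a
restrained dominating set of G. -/
theorem min_ridf_of_eq (G : SimpleGraph V) (f : V → ℕ) (hf : IsRIDF G f)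
    (hmin : ∑ v, f v = ridn G) (heq : ridn G = rdn G) :
    {v | f v = 2} = ∅ ∧ IsRDS G {v | f v = 1} := by
  have hle : ∀ v, f v ≤ 1 := le_one_of_sum_le_card_support f <| calc
    ∑ v, f v = rdn G := hmin.trans heq
    _ ≤ ({v | f v ≠ 0} : Set V).ncard := Nat.sInf_le ⟨_, hf.isRDS_support, rfl⟩
    _ = #{v | f v ≠ 0} := by rw [← coe_filter_univ, Set.ncard_coe_finset]
  have hsupport : {v | f v = 1} = {v | f v ≠ 0} := by
    ext v
    change f v = 1 ↔ f v ≠ 0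
    have := hle v
    omega
  refine ⟨Set.eq_empty_of_forall_notMem fun v hv => ?_, hsupport ▸ hf.isRDS_support⟩
  have := hle v
  change f v = 2 at hv
  omega
end

section
/- Let T be a tree belonging to the family F built from P_4 by repeatedly either (O1) adding a path P_3 with an end-vertex u joined to a previously-designated leaf x, or (O2) adding a healthy spider S_{t,t} with center u joined to a previously-designated leaf x (where LV(T_i) records vertices that were leaves at some stage). Then the set LV(T) is a packing in T: any two distinct vertices of LV(T) are at distance at least 3. -/
open SimpleGraph Finset

/-- D is a restrained dominating set of the graph G restricted to vertex set vs. -/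
def IsRDSOn (G : SimpleGraph ℕ) (vs D : Finset ℕ) : Prop :=
  D ⊆ vs ∧ ∀ v ∈ vs, v ∉ D → (∃ u ∈ D, G.Adj v u) ∧ ∃ u ∈ vs, u ∉ D ∧ G.Adj v u

/-- The restrained domination number of G on vertex set vs. -/
noncomputable def rdnOn (G : SimpleGraph ℕ) (vs : Finset ℕ) : ℕ :=
  sInf {n | ∃ D : Finset ℕ, IsRDSOn G vs D ∧ D.card = n}

open Classical in
/-- f is a restrained Italian dominating function of G on vertex set vs. -/
def IsRIDFOn (G : SimpleGraph ℕ) (vs : Finset ℕ) (f : ℕ → ℕ) : Prop :=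
  (∀ v ∈ vs, f v ≤ 2) ∧
  (∀ v ∈ vs, f v = 0 → 2 ≤ ∑ u ∈ vs.filter (fun u => G.Adj v u), f u) ∧
  (∀ v ∈ vs, f v = 0 → ∃ u ∈ vs, G.Adj v u ∧ f u = 0)

/-- The restrained Italian domination number of G on vertex set vs. -/
noncomputable def ridnOn (G : SimpleGraph ℕ) (vs : Finset ℕ) : ℕ :=
  sInf {n | ∃ f : ℕ → ℕ, IsRIDFOn G vs f ∧ ∑ v ∈ vs, f v = n}

/-- The family 𝓕 of trees built from P₄ by operations O1 (attach an end-vertex of a new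
P₃ to a vertex of LV) and O2 (attach the center of a new healthy spider S_{t,t} to a
vertex of LV).  `InF G vs lv` means: the graph G with vertex set vs is in the family,
with lv the set LV of vertices that were leaves at some stage of the construction. -/
inductive InF : SimpleGraph ℕ → Finset ℕ → Finset ℕ → Prop where
  | base (a b c d : ℕ) (hab : a ≠ b) (hac : a ≠ c) (had : a ≠ d) (hbc : b ≠ c)
      (hbd : b ≠ d) (hcd : c ≠ d) :
      InF (SimpleGraph.fromEdgeSet {s(a, b), s(b, c), s(c, d)}) {a, b, c, d} {a, d}
  | o1 (G : SimpleGraph ℕ) (vs lv : Finset ℕ) (x u v w : ℕ) (hG : InF G vs lv)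
      (hx : x ∈ lv) (hu : u ∉ vs) (hv : v ∉ vs) (hw : w ∉ vs)
      (huv : u ≠ v) (huw : u ≠ w) (hvw : v ≠ w) :
      InF (G ⊔ SimpleGraph.fromEdgeSet {s(x, u), s(u, v), s(v, w)})
        (vs ∪ {u, v, w}) (lv ∪ {w})
  | o2 (G : SimpleGraph ℕ) (vs lv : Finset ℕ) (x : ℕ) (t : ℕ) (u : ℕ)
      (mid lf : Fin t → ℕ) (ht : 1 ≤ t) (hG : InF G vs lv) (hx : x ∈ lv)
      (hu : u ∉ vs) (hmid : ∀ i, mid i ∉ vs) (hlf : ∀ i, lf i ∉ vs)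
      (hinj : Function.Injective
        (fun p : Fin t ⊕ Fin t ⊕ Unit => Sum.elim mid (Sum.elim lf fun _ => u) p)) :
      InF (G ⊔ SimpleGraph.fromEdgeSet
          (({s(x, u)} : Set (Sym2 ℕ)) ∪ ⋃ i : Fin t, {s(u, mid i), s(mid i, lf i)}))
        (vs ∪ ({u} ∪ Finset.image mid Finset.univ ∪ Finset.image lf Finset.univ))
        (lv ∪ Finset.image lf Finset.univ)

/-!
Each construction step hangs a fresh tree from a single vertex `x ∈ LV` by one edge `xu`. A walk
of length at most two between old vertices that used new edges would have to pass through `u`,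
hence start and end at `x`; so old pairs stay at distance at least three. A new leaf has a single
neighbour, a fresh vertex not adjacent to any old vertex or to the other new leaves, which
separates it from everything else in `LV`. Operation O1 is O2 with `t = 1`, and `P₄` is obtained
from a single vertex by O1, so the spider step is the only case.
-/

namespace SimpleGraph

variable {V : Type*} {G H : SimpleGraph V}

lemma Reachable.three_le_dist {a b : V} (hr : G.Reachable a b) (h : 2 < G.edist a b) :
    3 ≤ G.dist a b := by
  rw [← hr.coe_dist_eq_edist] at h
  exact_mod_cast h

lemma two_lt_edist_iff_forall {a b : V} :
    2 < G.edist a b ↔ a ≠ b ∧ ¬G.Adj a b ∧ ∀ z, G.Adj a z → ¬G.Adj b z := by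
  simp [two_lt_edist_iff, Set.eq_empty_iff_forall_notMem, mem_commonNeighbors]

lemma two_lt_edist_of_forall_adj_eq {a b m : V} (hab : a ≠ b) (ham : a ≠ m)
    (hnam : ¬G.Adj a m) (hb : ∀ z, G.Adj b z → z = m) : 2 < G.edist a b := by
  refine two_lt_edist_iff_forall.mpr ⟨hab, fun h => ham (hb a h.symm), fun z haz hbz => ?_⟩
  exact hnam (hb z hbz ▸ haz)

lemma two_lt_edist_sup {s : Set V} {x u a b : V} (hG : G.support ⊆ s) (hu : u ∉ s)
    (hH : ∀ p q, H.Adj p q → p ∈ s → p = x ∧ q = u) (ha : a ∈ s) (hb : b ∈ s)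
    (h : 2 < G.edist a b) : 2 < (G ⊔ H).edist a b := by
  have hGu : ∀ p, ¬G.Adj p u := fun p hpu => hu (hG ⟨p, hpu.symm⟩)
  rw [two_lt_edist_iff_forall] at h ⊢
  obtain ⟨hab, hnadj, hcn⟩ := h
  refine ⟨hab, ?_, ?_⟩
  · rintro (h | h)
    · exact hnadj h
    · exact hu ((hH a b h ha).2 ▸ hb)
  · rintro z (haz | haz) (hbz | hbz)
    · exact hcn z haz hbz
    · exact hGu a ((hH b z hbz hb).2 ▸ haz)
    · exact hGu b ((hH a z haz ha).2 ▸ hbz)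
    · exact hab ((hH a z haz ha).1.trans (hH b z hbz hb).1.symm)

section Spider

variable {x u : V} {t : ℕ} {mid lf : Fin t → V}

def spiderAt (x u : V) (mid lf : Fin t → V) : SimpleGraph V :=
  fromEdgeSet ({s(x, u)} ∪ ⋃ i, {s(u, mid i), s(mid i, lf i)})

lemma spiderAt_adj {p q : V} :
    (spiderAt x u mid lf).Adj p q ↔
      p ≠ q ∧ (s(p, q) = s(x, u) ∨ ∃ i, s(p, q) = s(u, mid i) ∨ s(p, q) = s(mid i, lf i)) := by
  simp [spiderAt, and_comm]

lemma spiderAt_support_subset :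
    (spiderAt x u mid lf).support ⊆ insert x (insert u (Set.range mid ∪ Set.range lf)) := by
  rintro p ⟨q, h⟩
  simp only [spiderAt_adj, Sym2.eq_iff] at h
  aesop

lemma eq_and_eq_of_spiderAt_adj {s : Set V} (hu : u ∉ s) (hmid : ∀ i, mid i ∉ s)
    (hlf : ∀ i, lf i ∉ s) {p q : V} (h : (spiderAt x u mid lf).Adj p q) (hp : p ∈ s) :
    p = x ∧ q = u := by
  simp only [spiderAt_adj, Sym2.eq_iff] at h
  aesop

lemma eq_mid_of_spiderAt_adj (hlf : Function.Injective lf) {j : Fin t} (hx : lf j ≠ x)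
    (hu : lf j ≠ u) (hmid : ∀ i, lf j ≠ mid i) {z : V} (h : (spiderAt x u mid lf).Adj (lf j) z) :
    z = mid j := by
  simp only [spiderAt_adj, Sym2.eq_iff, hlf.eq_iff] at h
  aesop

lemma spiderAt_reachable (hxu : x ≠ u) {j : Fin t} (hu : u ≠ mid j) (hmid : mid j ≠ lf j) :
    (spiderAt x u mid lf).Reachable x (lf j) := by
  have hxu' : (spiderAt x u mid lf).Adj x u := spiderAt_adj.mpr ⟨hxu, .inl rfl⟩
  have hum : (spiderAt x u mid lf).Adj u (mid j) := spiderAt_adj.mpr ⟨hu, .inr ⟨j, .inl rfl⟩⟩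
  have hml : (spiderAt x u mid lf).Adj (mid j) (lf j) :=
    spiderAt_adj.mpr ⟨hmid, .inr ⟨j, .inr rfl⟩⟩
  exact hxu'.reachable.trans (hum.reachable.trans hml.reachable)

lemma support_sup_spiderAt_subset [DecidableEq V] {vs : Finset V} (hG : G.support ⊆ vs)
    (hx : x ∈ vs) :
    (G ⊔ spiderAt x u mid lf).support ⊆ ↑(vs ∪ ({u} ∪ image mid univ ∪ image lf univ)) := by
  rintro p ⟨q, hpq | hpq⟩
  · exact mem_union_left _ (hG ⟨q, hpq⟩)
  · have := spiderAt_support_subset ⟨q, hpq⟩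
    simp only [Set.mem_insert_iff, Set.mem_union, Set.mem_range] at this
    rcases this with rfl | rfl | ⟨i, rfl⟩ | ⟨i, rfl⟩ <;> simp [hx]

end Spider

structure IsPackingOn (G : SimpleGraph V) (vs lv : Finset V) : Prop where
  support_subset : G.support ⊆ vs
  subset : lv ⊆ vs
  reachable : ∀ a ∈ lv, ∀ b ∈ lv, G.Reachable a b
  two_lt_edist : (lv : Set V).Pairwise fun a b => 2 < G.edist a b

lemma IsPackingOn.sup_spiderAt [DecidableEq V] {vs lv : Finset V} (hP : G.IsPackingOn vs lv)
    {x u : V} {t : ℕ} {mid lf : Fin t → V} (hx : x ∈ lv) (hu : u ∉ vs) (hmid : ∀ i, mid i ∉ vs)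
    (hlf : ∀ i, lf i ∉ vs)
    (hinj : Function.Injective (Sum.elim mid (Sum.elim lf fun _ : Unit => u))) :
    (G ⊔ spiderAt x u mid lf).IsPackingOn (vs ∪ ({u} ∪ image mid univ ∪ image lf univ))
      (lv ∪ image lf univ) := by
  simp only [Sum.elim_injective, Sum.forall, Sum.elim_inl, Sum.elim_inr, forall_and,
    forall_const] at hinj
  obtain ⟨hmid_inj, ⟨hlf_inj, -, hlf_u⟩, hmid_lf, hmid_u⟩ := hinj
  have hxvs : x ∈ vs := hP.subset hx
  have hG : ∀ p q, q ∉ vs → ¬G.Adj p q := fun p q hq h => hq (hP.support_subset ⟨p, h.symm⟩)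
  have hH : ∀ p q, (spiderAt x u mid lf).Adj p q → p ∈ vs → p = x ∧ q = u :=
    fun p q h hp => eq_and_eq_of_spiderAt_adj hu hmid hlf h hp
  have hleaf : ∀ j z, (G ⊔ spiderAt x u mid lf).Adj (lf j) z → z = mid j := by
    rintro j z (h | h)
    · exact absurd h.symm (hG z _ (hlf j))
    · exact eq_mid_of_spiderAt_adj hlf_inj (ne_of_mem_of_not_mem hxvs (hlf j)).symm (hlf_u j)
        (fun i => (hmid_lf i j).symm) h
  have hreach : ∀ p ∈ lv ∪ image lf univ, (G ⊔ spiderAt x u mid lf).Reachable x p := by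
    intro p hp
    rcases mem_union.mp hp with hp | hp
    · exact (hP.reachable x hx p hp).mono le_sup_left
    · obtain ⟨j, -, rfl⟩ := mem_image.mp hp
      exact (spiderAt_reachable (ne_of_mem_of_not_mem hxvs hu) (hmid_u j).symm (hmid_lf j j)).mono
        le_sup_right
  refine ⟨support_sup_spiderAt_subset hP.support_subset hxvs,
    union_subset_union hP.subset subset_union_right,
    fun a ha b hb => (hreach a ha).symm.trans (hreach b hb), ?_⟩
  rw [coe_union, coe_image, coe_univ, Set.image_univ, Set.pairwise_union]
  refine ⟨fun a ha b hb hab => two_lt_edist_sup hP.support_subset hu hH (hP.subset ha)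
    (hP.subset hb) (hP.two_lt_edist ha hb hab), ?_, ?_⟩
  · rintro _ ⟨i, rfl⟩ _ ⟨j, rfl⟩ hij
    refine two_lt_edist_of_forall_adj_eq hij (hmid_lf j i).symm (fun h => ?_) (hleaf j)
    exact hij (congrArg lf (hmid_inj (hleaf i _ h)).symm)
  · rintro a ha _ ⟨j, rfl⟩ hab
    have ha' : a ∈ vs := hP.subset ha
    have hfar : 2 < (G ⊔ spiderAt x u mid lf).edist a (lf j) := by
      refine two_lt_edist_of_forall_adj_eq hab (ne_of_mem_of_not_mem ha' (hmid j)) ?_ (hleaf j)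
      rintro (h | h)
      · exact hG a _ (hmid j) h
      · exact hmid_u j (hH a _ h ha').2
    exact ⟨hfar, edist_comm ▸ hfar⟩

lemma IsPackingOn.sup_path [DecidableEq V] {vs lv : Finset V} (hP : G.IsPackingOn vs lv)
    {x u v w : V} (hx : x ∈ lv) (hu : u ∉ vs) (hv : v ∉ vs) (hw : w ∉ vs) (huv : u ≠ v)
    (huw : u ≠ w) (hvw : v ≠ w) :
    (G ⊔ fromEdgeSet {s(x, u), s(u, v), s(v, w)}).IsPackingOn (vs ∪ {u, v, w}) (lv ∪ {w}) := by
  have hinj : Function.Injective (Sum.elim (fun _ : Fin 1 => v) (Sum.elim (fun _ : Fin 1 => w)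
      fun _ : Unit => u)) := by
    simp [Sum.forall, Function.injective_of_subsingleton, huv.symm, huw.symm, hvw]
  convert hP.sup_spiderAt hx hu (fun _ => hv) (fun _ => hw) hinj using 2
  · simp only [spiderAt, Set.iUnion_const, Set.singleton_union]
  · simp
  · simp

lemma isPackingOn_bot_singleton (a : V) : (⊥ : SimpleGraph V).IsPackingOn {a} {a} where
  support_subset := by simp
  subset := subset_rfl
  reachable := by simp
  two_lt_edist := by simp

end SimpleGraph

lemma InF.isPackingOn {G : SimpleGraph ℕ} {vs lv : Finset ℕ} (h : InF G vs lv) :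
    G.IsPackingOn vs lv := by
  induction h with
  | base a b c d hab hac had hbc hbd hcd =>
    convert (isPackingOn_bot_singleton a).sup_path (mem_singleton_self a)
      (by simpa using hab.symm) (by simpa using hac.symm) (by simpa using had.symm) hbc hbd hcd
      using 1
    · exact (bot_sup_eq _).symm
    · exact insert_eq a _
    · exact insert_eq a _
  | o1 G vs lv x u v w _ hx hu hv hw huv huw hvw ih => exact ih.sup_path hx hu hv hw huv huw hvw
  | o2 G vs lv x t u mid lf _ _ hx hu hmid hlf hinj ih => exact ih.sup_spiderAt hx hu hmid hlf hinj

/-- For a tree in the family 𝓕, the set LV is a packing: any two distinct vertices of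
LV are at distance at least 3. -/
theorem lv_packing (G : SimpleGraph ℕ) (vs lv : Finset ℕ) (h : InF G vs lv) :
    ∀ a ∈ lv, ∀ b ∈ lv, a ≠ b → 3 ≤ G.dist a b := fun a ha b hb hab =>
  (h.isPackingOn.reachable a ha b hb).three_le_dist (h.isPackingOn.two_lt_edist ha hb hab)
end

section
/- Let T be a tree in the family F (built from P_4 by operations O1: attach a P_3 via one of its end-vertices to a leaf-type vertex, and O2: attach the center of a healthy spider S_{t,t} to a leaf-type vertex). Then LV(T), the set of vertices that were leaves at some stage of the construction, is a minimum dominating set of T. -/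
open SimpleGraph Finset

/-- D is a dominating set of the graph G restricted to vertex set vs. -/
def IsDomOn (G : SimpleGraph ℕ) (vs D : Finset ℕ) : Prop :=
  D ⊆ vs ∧ ∀ v ∈ vs, v ∉ D → ∃ u ∈ D, G.Adj v u

/-!
Both operations hang a healthy spider from a vertex `x ∈ LV` (O1 is the spider with one leg, and
`P₄` is `K₁` with such a spider attached), and LV gains the `t` feet of the legs. A dominating set
`D` of the new tree has a vertex in each leg, since every foot is a leaf. Deleting the new vertices
from `D`, and adding `x` if the centre was in `D`, leaves a dominating set of the old tree, so by
induction `|D| ≥ |LV_old| + t = |LV_new|`.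
-/

def IsMinDomOn (G : SimpleGraph ℕ) (vs D : Finset ℕ) : Prop :=
  IsDomOn G vs D ∧ ∀ D' : Finset ℕ, IsDomOn G vs D' → D.card ≤ D'.card

lemma isMinDomOn_bot_singleton (a : ℕ) : IsMinDomOn ⊥ {a} {a} := by
  refine ⟨⟨subset_rfl, by simp⟩, fun D ⟨_, hD⟩ => ?_⟩
  have haD : a ∈ D := by
    by_contra ha
    simpa using hD a (mem_singleton_self a) ha
  simpa using card_pos.mpr ⟨a, haD⟩

lemma IsDomOn.restrict {G H : SimpleGraph ℕ} {vs W D : Finset ℕ} {x u : ℕ}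
    (hG : G.support ⊆ vs) (hH : ∀ v ∈ vs, ∀ y, H.Adj v y → v = x ∧ y = u) (hx : x ∈ vs)
    (hvs : vs ⊆ W) (hD : IsDomOn (G ⊔ H) W D) :
    IsDomOn G vs (if u ∈ D then insert x (D ∩ vs) else D ∩ vs) := by
  refine ⟨by split_ifs <;> simp [insert_subset_iff, hx, inter_subset_right], fun v hv hvD' => ?_⟩
  have hvD : v ∉ D := fun hvD => hvD' (by split_ifs <;> simp [hvD, hv])
  obtain ⟨y, hyD, hvy | hvy⟩ := hD.2 v (hvs hv) hvD
  · have hy : y ∈ vs := hG (G.mem_support.mpr ⟨v, hvy.symm⟩)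
    exact ⟨y, by split_ifs <;> simp [hyD, hy], hvy⟩
  · obtain ⟨rfl, rfl⟩ := hH v hv y hvy
    exact absurd (by simp [hyD]) hvD'

lemma card_ite_insert_le {α : Type*} [DecidableEq α] (p : Prop) [Decidable p] (s : Finset α)
    (x : α) :
    (if p then insert x s else s).card ≤ s.card + if p then 1 else 0 := by
  split_ifs
  · exact card_insert_le _ _
  · rfl

section Spider

variable {ι : Type*}

/-- The healthy spider `S_{t,t}` with centre `u` and legs `u - mid i - lf i`, attached to `x` by
the edge `x u`. -/
def spiderEdges (x u : ℕ) (mid lf : ι → ℕ) : Set (Sym2 ℕ) :=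
  {s(x, u)} ∪ ⋃ i, {s(u, mid i), s(mid i, lf i)}

def spiderVerts [Fintype ι] (u : ℕ) (mid lf : ι → ℕ) : Finset ℕ :=
  {u} ∪ image mid univ ∪ image lf univ

structure IsFreshSpider (vs : Finset ℕ) (x u : ℕ) (mid lf : ι → ℕ) : Prop where
  x_mem : x ∈ vs
  u_notMem : u ∉ vs
  mid_notMem : ∀ i, mid i ∉ vs
  lf_notMem : ∀ i, lf i ∉ vs
  injective : Function.Injective (fun p : ι ⊕ ι ⊕ Unit => Sum.elim mid (Sum.elim lf fun _ => u) p)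

namespace IsFreshSpider

variable {vs : Finset ℕ} {x u : ℕ} {mid lf : ι → ℕ} (hS : IsFreshSpider vs x u mid lf)
include hS

lemma mid_injective : Function.Injective mid := fun i j h => by
  simpa using hS.injective (a₁ := .inl i) (a₂ := .inl j) h

lemma lf_injective : Function.Injective lf := fun i j h => by
  simpa using hS.injective (a₁ := .inr (.inl i)) (a₂ := .inr (.inl j)) h

lemma mid_ne_lf (i j : ι) : mid i ≠ lf j :=
  hS.injective.ne (Sum.inl_ne_inr (a := i) (b := (.inl j : ι ⊕ Unit)))

lemma mid_ne_u (i : ι) : mid i ≠ u :=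
  hS.injective.ne (Sum.inl_ne_inr (a := i) (b := (.inr () : ι ⊕ Unit)))

lemma lf_ne_u (i : ι) : lf i ≠ u :=
  hS.injective.ne (Sum.inr_injective.ne (Sum.inl_ne_inr (a := i) (b := ())))

lemma eq_of_adj_of_mem {v y : ℕ} (hv : v ∈ vs) (h : (fromEdgeSet (spiderEdges x u mid lf)).Adj v y) :
    v = x ∧ y = u := by
  simp only [spiderEdges, fromEdgeSet_adj, Set.mem_union, Set.mem_singleton_iff, Set.mem_iUnion,
    Set.mem_insert_iff, Sym2.eq_iff] at h
  obtain ⟨(⟨rfl, rfl⟩ | ⟨rfl, -⟩) | ⟨j, (⟨rfl, -⟩ | ⟨rfl, -⟩) | ⟨rfl, -⟩ | ⟨rfl, -⟩⟩, -⟩ := h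
  · exact ⟨rfl, rfl⟩
  · exact absurd hv hS.u_notMem
  · exact absurd hv hS.u_notMem
  · exact absurd hv (hS.mid_notMem j)
  · exact absurd hv (hS.mid_notMem j)
  · exact absurd hv (hS.lf_notMem j)

lemma eq_mid_of_adj_lf {i : ι} {y : ℕ} (h : (fromEdgeSet (spiderEdges x u mid lf)).Adj (lf i) y) :
    y = mid i := by
  simp only [spiderEdges, fromEdgeSet_adj, Set.mem_union, Set.mem_singleton_iff, Set.mem_iUnion,
    Set.mem_insert_iff, Sym2.eq_iff] at h
  obtain ⟨(⟨hx, -⟩ | ⟨hu, -⟩) | ⟨j, (⟨hu, -⟩ | ⟨hmid, -⟩) | ⟨hmid, -⟩ | ⟨hlf, rfl⟩⟩, -⟩ := h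
  · exact absurd (hx ▸ hS.x_mem) (hS.lf_notMem i)
  · exact absurd hu (hS.lf_ne_u i)
  · exact absurd hu (hS.lf_ne_u i)
  · exact absurd hmid.symm (hS.mid_ne_lf j i)
  · exact absurd hmid.symm (hS.mid_ne_lf j i)
  · rw [hS.lf_injective hlf]

lemma adj_x_u : (fromEdgeSet (spiderEdges x u mid lf)).Adj x u :=
  ⟨by simp [spiderEdges], fun h => hS.u_notMem (h ▸ hS.x_mem)⟩

lemma adj_mid_lf (i : ι) : (fromEdgeSet (spiderEdges x u mid lf)).Adj (mid i) (lf i) :=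
  ⟨Set.mem_union_right _ (Set.mem_iUnion_of_mem i (by simp)), hS.mid_ne_lf i i⟩

variable [Fintype ι] {G : SimpleGraph ℕ}

lemma support_sup_subset (hG : G.support ⊆ vs) :
    (G ⊔ fromEdgeSet (spiderEdges x u mid lf)).support ⊆ ↑(vs ∪ spiderVerts u mid lf) := by
  rintro v ⟨y, hvy | hvy⟩
  · exact mem_union_left _ (hG ⟨y, hvy⟩)
  simp only [spiderEdges, fromEdgeSet_adj, Set.mem_union, Set.mem_singleton_iff, Set.mem_iUnion,
    Set.mem_insert_iff, Sym2.eq_iff] at hvy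
  obtain ⟨(⟨rfl, -⟩ | ⟨rfl, -⟩) | ⟨j, (⟨rfl, -⟩ | ⟨rfl, -⟩) | ⟨rfl, -⟩ | ⟨rfl, -⟩⟩, -⟩ := hvy <;>
    simp [spiderVerts, hS.x_mem]

lemma isDomOn_sup {lv : Finset ℕ} (hlv : IsDomOn G vs lv) (hx : x ∈ lv) :
    IsDomOn (G ⊔ fromEdgeSet (spiderEdges x u mid lf)) (vs ∪ spiderVerts u mid lf)
      (lv ∪ image lf univ) := by
  refine ⟨union_subset_union hlv.1 subset_union_right, fun v hv hvD => ?_⟩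
  simp only [spiderVerts, mem_union, mem_singleton, mem_image, mem_univ, true_and] at hv hvD
  push Not at hvD
  rcases hv with hv | (rfl | ⟨i, rfl⟩) | ⟨i, rfl⟩
  · obtain ⟨y, hy, hvy⟩ := hlv.2 v hv hvD.1
    exact ⟨y, mem_union_left _ hy, Or.inl hvy⟩
  · exact ⟨x, mem_union_left _ hx, Or.inr hS.adj_x_u.symm⟩
  · exact ⟨lf i, by simp, Or.inr (hS.adj_mid_lf i)⟩
  · exact absurd rfl (hvD.2 i)

/-- Each leg contains a vertex of `D`, and the centre `u` may be one more. -/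
lemma card_add_le_card_sdiff {D : Finset ℕ} (hG : G.support ⊆ vs)
    (hD : IsDomOn (G ⊔ fromEdgeSet (spiderEdges x u mid lf)) (vs ∪ spiderVerts u mid lf) D) :
    Fintype.card ι + (if u ∈ D then 1 else 0) ≤ (D \ vs).card := by
  have leg : ∀ i, mid i ∉ D → lf i ∈ D := fun i hmid => by
    by_contra hlf
    obtain ⟨y, hyD, hy | hy⟩ := hD.2 (lf i) (by simp [spiderVerts]) hlf
    · exact hS.lf_notMem i (hG ⟨y, hy⟩)
    · exact hmid (hS.eq_mid_of_adj_lf hy ▸ hyD)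
  set g : ι → ℕ := fun i => if mid i ∈ D then mid i else lf i
  have hg_mem : ∀ i, g i ∈ D \ vs := fun i => by
    by_cases h : mid i ∈ D
    · simpa [g, h] using hS.mid_notMem i
    · simpa [g, h, leg i h] using hS.lf_notMem i
  have hg_inj : Function.Injective g := fun i j h => by
    simp only [g] at h
    split_ifs at h
    · exact hS.mid_injective h
    · exact absurd h (hS.mid_ne_lf i j)
    · exact absurd h.symm (hS.mid_ne_lf j i)
    · exact hS.lf_injective h
  have hu_notMem : u ∉ univ.image g := by
    simp only [mem_image, mem_univ, true_and, not_exists, g]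
    intro i
    split_ifs
    exacts [hS.mid_ne_u i, hS.lf_ne_u i]
  have hg_subset : univ.image g ⊆ D \ vs := image_subset_iff.2 fun i _ => hg_mem i
  have hg_card : (univ.image g).card = Fintype.card ι := by
    rw [card_image_of_injective _ hg_inj, card_univ]
  split_ifs with hu
  · calc Fintype.card ι + 1 = (insert u (univ.image g)).card := by
          rw [card_insert_of_notMem hu_notMem, hg_card]
      _ ≤ (D \ vs).card :=
          card_le_card (insert_subset (mem_sdiff.2 ⟨hu, hS.u_notMem⟩) hg_subset)
  · simpa [hg_card] using card_le_card hg_subset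

lemma card_union_image_lf {lv : Finset ℕ} (hlv : lv ⊆ vs) :
    (lv ∪ image lf univ).card = lv.card + Fintype.card ι := by
  rw [card_union_of_disjoint, card_image_of_injective _ hS.lf_injective, card_univ]
  refine disjoint_left.2 fun v hv hv' => ?_
  obtain ⟨i, -, rfl⟩ := mem_image.1 hv'
  exact hS.lf_notMem i (hlv hv)

theorem isMinDomOn_sup {lv : Finset ℕ} (hG : G.support ⊆ vs) (hlv : IsMinDomOn G vs lv)
    (hx : x ∈ lv) :
    IsMinDomOn (G ⊔ fromEdgeSet (spiderEdges x u mid lf)) (vs ∪ spiderVerts u mid lf)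
      (lv ∪ image lf univ) := by
  refine ⟨hS.isDomOn_sup hlv.1 hx, fun D hD => ?_⟩
  have h_restrict := hlv.2 _ (hD.restrict hG (fun _ hv _ => hS.eq_of_adj_of_mem hv) hS.x_mem
    subset_union_left)
  have := card_ite_insert_le (u ∈ D) (D ∩ vs) x
  have := hS.card_add_le_card_sdiff hG hD
  have := card_inter_add_card_sdiff D vs
  rw [hS.card_union_image_lf hlv.1.1]
  omega

end IsFreshSpider

end Spider

section Path3

variable {vs : Finset ℕ} {x u v w : ℕ}

lemma isFreshSpider_path3 (hx : x ∈ vs) (hu : u ∉ vs) (hv : v ∉ vs) (hw : w ∉ vs) (huv : u ≠ v)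
    (huw : u ≠ w) (hvw : v ≠ w) : IsFreshSpider vs x u (fun _ : Unit => v) (fun _ => w) :=
  ⟨hx, hu, fun _ => hv, fun _ => hw, by
    rintro (⟨⟩ | ⟨⟩ | ⟨⟩) (⟨⟩ | ⟨⟩ | ⟨⟩) h <;> simp_all [eq_comm]⟩

lemma spiderEdges_path3 :
    spiderEdges x u (fun _ : Unit => v) (fun _ => w) = {s(x, u), s(u, v), s(v, w)} := by
  ext e; simp [spiderEdges]

lemma spiderVerts_path3 : spiderVerts u (fun _ : Unit => v) (fun _ => w) = {u, v, w} := by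
  ext y; simp [spiderVerts]

end Path3

/-- For a tree in the family 𝓕, the set LV is a minimum dominating set. -/
theorem lv_min_dominating (G : SimpleGraph ℕ) (vs lv : Finset ℕ) (h : InF G vs lv) :
    IsDomOn G vs lv ∧ ∀ D : Finset ℕ, IsDomOn G vs D → lv.card ≤ D.card := by
  suffices G.support ⊆ vs ∧ IsMinDomOn G vs lv from this.2
  induction h with
  | base a b c d hab hac had hbc hbd hcd =>
    have hS := isFreshSpider_path3 (mem_singleton_self a)
      (by simpa using hab.symm) (by simpa using hac.symm) (by simpa using had.symm) hbc hbd hcd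
    have h := And.intro (hS.support_sup_subset (G := ⊥) (by simp))
      (hS.isMinDomOn_sup (by simp) (isMinDomOn_bot_singleton a) (mem_singleton_self a))
    rwa [spiderEdges_path3, spiderVerts_path3, bot_sup_eq, image_const univ_nonempty,
      singleton_union, singleton_union] at h
  | o1 G vs lv x u v w _ hx hu hv hw huv huw hvw ih =>
    have hS := isFreshSpider_path3 (ih.2.1.1 hx) hu hv hw huv huw hvw
    have h := And.intro (hS.support_sup_subset ih.1) (hS.isMinDomOn_sup ih.1 ih.2 hx)
    rwa [spiderEdges_path3, spiderVerts_path3, image_const univ_nonempty] at h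
  | o2 G vs lv x t u mid lf _ _ hx hu hmid hlf hinj ih =>
    have hS : IsFreshSpider vs x u mid lf := ⟨ih.2.1.1 hx, hu, hmid, hlf, hinj⟩
    exact ⟨hS.support_sup_subset ih.1, hS.isMinDomOn_sup ih.1 ih.2 hx⟩
end

section
/- Let T be a tree in family F built by operations O1 and O2, and let P(T) = { N[v] : v ∈ LV(T) }. Then P(T) is a partition of V(T) into closed neighborhoods of vertices of LV(T), and every restrained Italian dominating function f of T satisfies Σ_{x ∈ N[v]} f(x) ≥ 2 for each v ∈ LV(T); hence γ_{rI}(T) ≥ 2|LV(T)|. -/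
/-!
Call `lv` a leaf code of a graph on `vs` if it is a perfect code (every vertex lies in `N[w]` for
exactly one `w ∈ lv`) and every `w ∈ lv` has a degree-two neighbour outside `lv`. `P₄` with its two
ends is a leaf code. O1 and O2 glue onto `T` at a single vertex `x ∈ LV(T)` a graph `H` (a `P₄`,
resp. a spider hanging from `x`) with a perfect code containing `x` whose other vertices have
degree-two neighbours; such a gluing preserves leaf codes, so `LV(T)` is a leaf code of `T`.

If `w` has a neighbour `s` with `N(s) = {w, c}`, an RIDF `f` puts weight at least `2` on `N[w]`:
otherwise `f w = 1` and `f` vanishes on `N(w)`, so `s` is a `0`-vertex and needs `f c ≥ 1`, leaving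
`s` without a `0`-neighbour. Summing over the disjoint sets `N[w]` gives `γ_{rI}(T) ≥ 2|LV(T)|`.
-/

open SimpleGraph Finset

def IsPerfectCodeOn (G : SimpleGraph ℕ) (vs lv : Finset ℕ) : Prop :=
  ∀ v ∈ vs, ∃! w, w ∈ lv ∧ (v = w ∨ G.Adj w v)

section RIDF

variable {G : SimpleGraph ℕ} {vs : Finset ℕ} {f : ℕ → ℕ}

open Classical in
theorem IsRIDFOn.two_le_add_sum_adj (hf : IsRIDFOn G vs f) {w s c : ℕ} (hw : w ∈ vs)
    (hs : s ∈ vs) (hc : c ∈ vs) (hcw : c ≠ w) (hN : ∀ y, G.Adj s y ↔ y = w ∨ y = c) :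
    2 ≤ f w + ∑ u ∈ vs.filter (fun u => G.Adj w u), f u := by
  obtain ⟨-, hsum, hzero⟩ := hf
  by_contra! hlt
  have hfw : 1 ≤ f w := by
    by_contra! h0
    have := hsum w hw (by omega)
    omega
  have hfs : f s = 0 := by
    have hsw : s ∈ vs.filter (fun u => G.Adj w u) :=
      mem_filter.2 ⟨hs, ((hN w).2 (Or.inl rfl)).symm⟩
    have := single_le_sum (fun _ _ => Nat.zero_le _) hsw (f := f)
    omega
  have hNs : vs.filter (fun u => G.Adj s u) = {w, c} := by
    ext y
    simp only [mem_filter, hN, mem_insert, mem_singleton]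
    constructor
    · exact And.right
    · rintro (rfl | rfl) <;> simp [hw, hc]
  have hwc := hsum s hs hfs
  rw [hNs, sum_pair hcw.symm] at hwc
  obtain ⟨y, -, hsy, hy⟩ := hzero s hs hfs
  rcases (hN y).1 hsy with rfl | rfl <;> omega

open Classical in
theorem IsPerfectCodeOn.two_mul_card_le_sum {lv : Finset ℕ} (hcode : IsPerfectCodeOn G vs lv)
    (hlv : lv ⊆ vs) (h2 : ∀ w ∈ lv, 2 ≤ f w + ∑ u ∈ vs.filter (fun u => G.Adj w u), f u) :
    2 * lv.card ≤ ∑ v ∈ vs, f v := by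
  set N : ℕ → Finset ℕ := fun w => insert w (vs.filter (fun u => G.Adj w u))
  have hNvs : ∀ w ∈ lv, N w ⊆ vs := fun w hw =>
    insert_subset (hlv hw) (filter_subset _ _)
  have hmemN : ∀ {w z}, z ∈ N w → z ∈ vs → z = w ∨ G.Adj w z := by
    intro w z hz hzvs
    simpa [N, hzvs] using hz
  have hdisj : (lv : Set ℕ).PairwiseDisjoint N := by
    intro w hw w' hw' hne
    refine disjoint_left.2 fun z hz hz' => hne ?_
    have hzvs := hNvs w hw hz
    exact (hcode z hzvs).unique ⟨hw, hmemN hz hzvs⟩ ⟨hw', hmemN hz' hzvs⟩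
  have hsumN : ∀ w ∈ lv, 2 ≤ ∑ z ∈ N w, f z := fun w hw => by
    rw [sum_insert fun h => G.irrefl (mem_filter.1 h).2]
    exact h2 w hw
  calc 2 * lv.card = ∑ _w ∈ lv, 2 := by rw [sum_const, smul_eq_mul, mul_comm]
    _ ≤ ∑ w ∈ lv, ∑ z ∈ N w, f z := sum_le_sum hsumN
    _ = ∑ z ∈ lv.biUnion N, f z := (sum_biUnion hdisj).symm
    _ ≤ ∑ v ∈ vs, f v := sum_le_sum_of_subset (biUnion_subset.2 hNvs)

theorem le_ridnOn {n : ℕ} (h : ∀ f, IsRIDFOn G vs f → n ≤ ∑ v ∈ vs, f v) :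
    n ≤ ridnOn G vs := by
  have hconst : IsRIDFOn G vs fun _ => 2 := ⟨fun _ _ => le_rfl, by simp, by simp⟩
  exact le_csInf ⟨_, _, hconst, rfl⟩ (by rintro _ ⟨f, hf, rfl⟩; exact h f hf)

end RIDF

-- `s ∉ lv` keeps `s` off the gluing vertex, so `N(s)` survives gluing at a vertex of `lv`.
def HasDegreeTwoNeighbor (G : SimpleGraph ℕ) (lv : Finset ℕ) (w : ℕ) : Prop :=
  ∃ s c, s ∉ lv ∧ c ≠ w ∧ ∀ y, G.Adj s y ↔ y = w ∨ y = c

structure IsLeafCode (G : SimpleGraph ℕ) (vs lv : Finset ℕ) : Prop where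
  mem_of_adj : ∀ ⦃a b⦄, G.Adj a b → a ∈ vs
  subset : lv ⊆ vs
  perfectCode : IsPerfectCodeOn G vs lv
  degreeTwoNeighbor : ∀ w ∈ lv, HasDegreeTwoNeighbor G lv w

section Sup

variable {G H : SimpleGraph ℕ} {vs ws lv lvH : Finset ℕ} {x : ℕ}

theorem IsPerfectCodeOn.existsUnique_sup (hGadj : ∀ ⦃a b⦄, G.Adj a b → a ∈ vs)
    (hHadj : ∀ ⦃a b⦄, H.Adj a b → a ∈ ws) (hlv : lv ⊆ vs) (hlvH : lvH ⊆ ws)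
    (hG : IsPerfectCodeOn G vs lv) (hH : IsPerfectCodeOn H ws lvH) (hx : x ∈ lv)
    (hxH : x ∈ lvH) (hinter : ∀ v ∈ vs, v ∈ ws → v = x) {v : ℕ} (hv : v ∈ vs) :
    ∃! w, w ∈ lv ∪ lvH ∧ (v = w ∨ (G ⊔ H).Adj w v) := by
  have hlv_of_mem : ∀ w ∈ lv ∪ lvH, w ∈ vs → w ∈ lv := fun w hw hwvs =>
    (mem_union.1 hw).elim id fun hw => hinter w hwvs (hlvH hw) ▸ hx
  have hcand : ∀ w, w ∈ lv ∪ lvH ∧ (v = w ∨ (G ⊔ H).Adj w v) →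
      w ∈ lv ∧ (v = w ∨ G.Adj w v) := by
    rintro w ⟨hw, hwv | hwv | hwv⟩
    · exact ⟨hlv_of_mem w hw (hwv ▸ hv), Or.inl hwv⟩
    · exact ⟨hlv_of_mem w hw (hGadj hwv), Or.inr hwv⟩
    · obtain rfl : v = x := hinter v hv (hHadj hwv.symm)
      have hwv' : w = v := by
        rcases mem_union.1 hw with hw | hw
        · exact hinter w (hlv hw) (hHadj hwv)
        · exact (hH v (hlvH hxH)).unique ⟨hw, Or.inr hwv⟩ ⟨hxH, Or.inl rfl⟩
      exact ⟨hwv' ▸ hx, Or.inl hwv'.symm⟩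
  obtain ⟨w, hw, huniq⟩ := hG v hv
  exact ⟨w, ⟨mem_union_left _ hw.1, hw.2.imp_right fun h => Or.inl h⟩,
    fun w' hw' => huniq w' (hcand w' hw')⟩

theorem IsPerfectCodeOn.sup (hGadj : ∀ ⦃a b⦄, G.Adj a b → a ∈ vs)
    (hHadj : ∀ ⦃a b⦄, H.Adj a b → a ∈ ws) (hlv : lv ⊆ vs) (hlvH : lvH ⊆ ws)
    (hG : IsPerfectCodeOn G vs lv) (hH : IsPerfectCodeOn H ws lvH) (hx : x ∈ lv)
    (hxH : x ∈ lvH) (hinter : ∀ v ∈ vs, v ∈ ws → v = x) :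
    IsPerfectCodeOn (G ⊔ H) (vs ∪ ws) (lv ∪ lvH) := by
  intro v hv
  rcases mem_union.1 hv with hv | hv
  · exact hG.existsUnique_sup hGadj hHadj hlv hlvH hH hx hxH hinter hv
  · have := hH.existsUnique_sup hHadj hGadj hlvH hlv hG hxH hx (fun v hv hv' => hinter v hv' hv) hv
    rwa [sup_comm, union_comm] at this

theorem HasDegreeTwoNeighbor.sup {w : ℕ} (h : HasDegreeTwoNeighbor G lv w)
    (hGadj : ∀ ⦃a b⦄, G.Adj a b → a ∈ vs) (hHadj : ∀ ⦃a b⦄, H.Adj a b → a ∈ ws)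
    (hlvH : lvH ⊆ ws) (hx : x ∈ lv) (hinter : ∀ v ∈ vs, v ∈ ws → v = x) :
    HasDegreeTwoNeighbor (G ⊔ H) (lv ∪ lvH) w := by
  obtain ⟨s, c, hslv, hcw, hN⟩ := h
  have hsws : s ∉ ws := fun hs =>
    hslv (hinter s (hGadj ((hN w).2 (Or.inl rfl))) hs ▸ hx)
  refine ⟨s, c, fun hs => (mem_union.1 hs).elim hslv fun hs => hsws (hlvH hs), hcw, fun y => ?_⟩
  rw [sup_adj, ← hN]
  exact or_iff_left fun h => hsws (hHadj h)

theorem IsLeafCode.sup (hG : IsLeafCode G vs lv) (hHadj : ∀ ⦃a b⦄, H.Adj a b → a ∈ ws)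
    (hlvH : lvH ⊆ ws) (hH : IsPerfectCodeOn H ws lvH)
    (hHnbr : ∀ w ∈ lvH, w ≠ x → HasDegreeTwoNeighbor H lvH w) (hx : x ∈ lv) (hxH : x ∈ lvH)
    (hinter : ∀ v ∈ vs, v ∈ ws → v = x) :
    IsLeafCode (G ⊔ H) (vs ∪ ws) (lv ∪ lvH) where
  mem_of_adj _ _ hab :=
    hab.elim (fun h => mem_union_left _ (hG.mem_of_adj h)) fun h => mem_union_right _ (hHadj h)
  subset := union_subset_union hG.subset hlvH
  perfectCode := hG.perfectCode.sup hG.mem_of_adj hHadj hG.subset hlvH hH hx hxH hinter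
  degreeTwoNeighbor w hw := by
    by_cases hwlv : w ∈ lv
    · exact (hG.degreeTwoNeighbor w hwlv).sup hG.mem_of_adj hHadj hlvH hx hinter
    · have hwx : w ≠ x := by rintro rfl; exact hwlv hx
      have := (hHnbr w ((mem_union.1 hw).resolve_left hwlv) hwx).sup hHadj hG.mem_of_adj
        hG.subset hxH fun v hv hv' => hinter v hv' hv
      rwa [sup_comm, union_comm] at this

end Sup

theorem IsLeafCode.of_adj_iff_path4 {G : SimpleGraph ℕ} {a b c d : ℕ} (hab : a ≠ b) (hac : a ≠ c)
    (had : a ≠ d) (hbc : b ≠ c) (hbd : b ≠ d) (hcd : c ≠ d)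
    (hadj : ∀ p q, G.Adj p q ↔ p = a ∧ q = b ∨ p = b ∧ q = a ∨ p = b ∧ q = c ∨ p = c ∧ q = b ∨
      p = c ∧ q = d ∨ p = d ∧ q = c) :
    IsLeafCode G {a, b, c, d} {a, d} := by
  refine ⟨fun p q h => ?_, by simp [insert_subset_iff], fun v hv => ?_, fun w hw => ?_⟩
  · rw [hadj] at h
    simp only [mem_insert, mem_singleton]
    omega
  · simp only [mem_insert, mem_singleton] at hv
    simp only [mem_insert, mem_singleton, hadj]
    rcases hv with rfl | rfl | rfl | rfl
    · exact ⟨v, by omega, by omega⟩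
    · exact ⟨a, by omega, by omega⟩
    · exact ⟨d, by omega, by omega⟩
    · exact ⟨v, by omega, by omega⟩
  · simp only [mem_insert, mem_singleton] at hw
    rcases hw with rfl | rfl
    · refine ⟨b, c, by simp only [mem_insert, mem_singleton]; omega, hac.symm, fun y => ?_⟩
      rw [hadj]
      omega
    · exact ⟨c, b, by simp only [mem_insert, mem_singleton]; omega, hbd,
        fun y => by rw [hadj]; omega⟩

theorem isLeafCode_path4 {a b c d : ℕ} (hab : a ≠ b) (hac : a ≠ c) (had : a ≠ d) (hbc : b ≠ c)
    (hbd : b ≠ d) (hcd : c ≠ d) :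
    IsLeafCode (fromEdgeSet {s(a, b), s(b, c), s(c, d)}) {a, b, c, d} {a, d} := by
  refine .of_adj_iff_path4 hab hac had hbc hbd hcd fun p q => ?_
  simp only [fromEdgeSet_adj, Set.mem_insert_iff, Set.mem_singleton_iff, Sym2.eq_iff]
  constructor
  · rintro ⟨h, -⟩
    tauto
  · intro h
    exact ⟨by tauto, by omega⟩

-- The graph added by O2: the spider with centre `u` and legs `u - mid i - lf i`, and the edge `xu`.
def pendantSpider {t : ℕ} (x u : ℕ) (mid lf : Fin t → ℕ) : SimpleGraph ℕ :=
  fromEdgeSet (({s(x, u)} : Set (Sym2 ℕ)) ∪ ⋃ i : Fin t, {s(u, mid i), s(mid i, lf i)})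

structure PendantSpiderDistinct {t : ℕ} (x u : ℕ) (mid lf : Fin t → ℕ) : Prop where
  mid_injective : Function.Injective mid
  lf_injective : Function.Injective lf
  mid_ne_lf : ∀ i j, mid i ≠ lf j
  mid_ne_center : ∀ i, mid i ≠ u
  lf_ne_center : ∀ i, lf i ≠ u
  root_ne_center : x ≠ u
  root_ne_mid : ∀ i, x ≠ mid i
  root_ne_lf : ∀ i, x ≠ lf i

section PendantSpider

variable {t x u : ℕ} {mid lf : Fin t → ℕ}

theorem pendantSpider_adj {p q : ℕ} : (pendantSpider x u mid lf).Adj p q ↔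
    ((p = x ∧ q = u ∨ p = u ∧ q = x) ∨ ∃ i, (p = u ∧ q = mid i ∨ p = mid i ∧ q = u) ∨
      p = mid i ∧ q = lf i ∨ p = lf i ∧ q = mid i) ∧ p ≠ q := by
  simp only [pendantSpider, fromEdgeSet_adj, Set.mem_union, Set.mem_singleton_iff, Set.mem_iUnion,
    Set.mem_insert_iff, Sym2.eq_iff]

theorem mem_of_pendantSpider_adj {p q : ℕ} (h : (pendantSpider x u mid lf).Adj p q) :
    p ∈ insert x ({u} ∪ image mid univ ∪ image lf univ) := by
  rw [pendantSpider_adj] at h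
  rcases h.1 with (⟨rfl, -⟩ | ⟨rfl, -⟩) | ⟨i, (⟨rfl, -⟩ | ⟨rfl, -⟩) | ⟨rfl, -⟩ | ⟨rfl, -⟩⟩ <;> simp

namespace PendantSpiderDistinct

theorem adj_root (h : PendantSpiderDistinct x u mid lf) {y : ℕ} :
    (pendantSpider x u mid lf).Adj x y ↔ y = u := by
  rw [pendantSpider_adj]
  constructor
  · rintro ⟨(⟨-, rfl⟩ | ⟨hxu, -⟩) | ⟨i, (⟨hxu, -⟩ | ⟨hxm, -⟩) | ⟨hxm, -⟩ | ⟨hxl, -⟩⟩, -⟩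
    · rfl
    · exact absurd hxu h.root_ne_center
    · exact absurd hxu h.root_ne_center
    · exact absurd hxm (h.root_ne_mid i)
    · exact absurd hxm (h.root_ne_mid i)
    · exact absurd hxl (h.root_ne_lf i)
  · rintro rfl
    exact ⟨Or.inl (Or.inl ⟨rfl, rfl⟩), h.root_ne_center⟩

theorem adj_lf (h : PendantSpiderDistinct x u mid lf) (i : Fin t) {y : ℕ} :
    (pendantSpider x u mid lf).Adj (lf i) y ↔ y = mid i := by
  rw [pendantSpider_adj]
  constructor
  · rintro ⟨(⟨hlx, -⟩ | ⟨hlu, -⟩) | ⟨j, (⟨hlu, -⟩ | ⟨hlm, -⟩) | ⟨hlm, -⟩ | ⟨hll, rfl⟩⟩, -⟩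
    · exact absurd hlx (h.root_ne_lf i).symm
    · exact absurd hlu (h.lf_ne_center i)
    · exact absurd hlu (h.lf_ne_center i)
    · exact absurd hlm (h.mid_ne_lf j i).symm
    · exact absurd hlm (h.mid_ne_lf j i).symm
    · rw [h.lf_injective hll]
  · rintro rfl
    exact ⟨Or.inr ⟨i, Or.inr (Or.inr ⟨rfl, rfl⟩)⟩, (h.mid_ne_lf i i).symm⟩

theorem adj_mid (h : PendantSpiderDistinct x u mid lf) (i : Fin t) {y : ℕ} :
    (pendantSpider x u mid lf).Adj (mid i) y ↔ y = lf i ∨ y = u := by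
  rw [pendantSpider_adj]
  constructor
  · rintro ⟨(⟨hmx, -⟩ | ⟨hmu, -⟩) | ⟨j, (⟨hmu, -⟩ | ⟨-, rfl⟩) | ⟨hmm, rfl⟩ | ⟨hml, -⟩⟩, -⟩
    · exact absurd hmx (h.root_ne_mid i).symm
    · exact absurd hmu (h.mid_ne_center i)
    · exact absurd hmu (h.mid_ne_center i)
    · exact Or.inr rfl
    · rw [h.mid_injective hmm]
      exact Or.inl rfl
    · exact absurd hml (h.mid_ne_lf i j)
  · rintro (rfl | rfl)
    · exact ⟨Or.inr ⟨i, Or.inr (Or.inl ⟨rfl, rfl⟩)⟩, h.mid_ne_lf i i⟩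
    · exact ⟨Or.inr ⟨i, Or.inl (Or.inr ⟨rfl, rfl⟩)⟩, h.mid_ne_center i⟩

theorem isPerfectCodeOn (h : PendantSpiderDistinct x u mid lf) :
    IsPerfectCodeOn (pendantSpider x u mid lf) (insert x ({u} ∪ image mid univ ∪ image lf univ))
      (insert x (image lf univ)) := by
  have hcand : ∀ v w,
      (w ∈ insert x (image lf univ) ∧ (v = w ∨ (pendantSpider x u mid lf).Adj w v)) ↔
      w = x ∧ (v = x ∨ v = u) ∨ ∃ i, w = lf i ∧ (v = lf i ∨ v = mid i) := by
    intro v w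
    simp only [mem_insert, mem_image, mem_univ, true_and]
    constructor
    · rintro ⟨rfl | ⟨i, rfl⟩, hv⟩
      · exact Or.inl ⟨rfl, by rwa [h.adj_root] at hv⟩
      · exact Or.inr ⟨i, rfl, by rwa [h.adj_lf] at hv⟩
    · rintro (⟨rfl, hv⟩ | ⟨i, rfl, hv⟩)
      · exact ⟨Or.inl rfl, by rwa [h.adj_root]⟩
      · exact ⟨Or.inr ⟨i, rfl⟩, by rwa [h.adj_lf]⟩
  intro v hv
  simp only [hcand]
  simp only [mem_insert, mem_union, mem_singleton, mem_image, mem_univ, true_and] at hv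
  rcases hv with rfl | (rfl | ⟨i, rfl⟩) | ⟨i, rfl⟩
  · refine ⟨v, Or.inl ⟨rfl, Or.inl rfl⟩, ?_⟩
    rintro w (⟨rfl, -⟩ | ⟨j, -, hx | hx⟩)
    · rfl
    · exact absurd hx (h.root_ne_lf j)
    · exact absurd hx (h.root_ne_mid j)
  · refine ⟨x, Or.inl ⟨rfl, Or.inr rfl⟩, ?_⟩
    rintro w (⟨rfl, -⟩ | ⟨j, -, hu | hu⟩)
    · rfl
    · exact absurd hu.symm (h.lf_ne_center j)
    · exact absurd hu.symm (h.mid_ne_center j)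
  · refine ⟨lf i, Or.inr ⟨i, rfl, Or.inr rfl⟩, ?_⟩
    rintro w (⟨-, hm | hm⟩ | ⟨j, rfl, hm | hm⟩)
    · exact absurd hm.symm (h.root_ne_mid i)
    · exact absurd hm (h.mid_ne_center i)
    · exact absurd hm (h.mid_ne_lf i j)
    · rw [h.mid_injective hm]
  · refine ⟨lf i, Or.inr ⟨i, rfl, Or.inl rfl⟩, ?_⟩
    rintro w (⟨-, hl | hl⟩ | ⟨j, rfl, hl | hl⟩)
    · exact absurd hl.symm (h.root_ne_lf i)
    · exact absurd hl (h.lf_ne_center i)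
    · rw [h.lf_injective hl]
    · exact absurd hl.symm (h.mid_ne_lf j i)

theorem hasDegreeTwoNeighbor_lf (h : PendantSpiderDistinct x u mid lf) (i : Fin t) :
    HasDegreeTwoNeighbor (pendantSpider x u mid lf) (insert x (image lf univ)) (lf i) := by
  refine ⟨mid i, u, ?_, (h.lf_ne_center i).symm, fun y => h.adj_mid i⟩
  simp only [mem_insert, mem_image, mem_univ, true_and, not_or, not_exists]
  exact ⟨(h.root_ne_mid i).symm, fun j => (h.mid_ne_lf i j).symm⟩

theorem of_injective {s : Finset ℕ}
    (hinj : Function.Injective (Sum.elim mid (Sum.elim lf fun _ : Unit => u))) (hx : x ∈ s)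
    (hu : u ∉ s) (hmid : ∀ i, mid i ∉ s) (hlf : ∀ i, lf i ∉ s) :
    PendantSpiderDistinct x u mid lf := by
  obtain ⟨hmid_inj, hrest, hml⟩ := Sum.elim_injective.1 hinj
  obtain ⟨hlf_inj, -, hlu⟩ := Sum.elim_injective.1 hrest
  exact ⟨hmid_inj, hlf_inj, fun i j => hml i (.inl j), fun i => hml i (.inr ()),
    fun i => hlu i (), fun e => hu (e ▸ hx), fun i e => hmid i (e ▸ hx),
    fun i e => hlf i (e ▸ hx)⟩

end PendantSpiderDistinct

end PendantSpider

theorem union_insert_eq_of_mem {α : Type*} [DecidableEq α] {s t : Finset α} {a : α} (h : a ∈ s) :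
    s ∪ insert a t = s ∪ t := by
  rw [union_insert, insert_eq_of_mem (mem_union_left _ h)]

section Operations

variable {G : SimpleGraph ℕ} {vs lv : Finset ℕ} {x : ℕ}

theorem IsLeafCode.sup_path3 (hT : IsLeafCode G vs lv) (hx : x ∈ lv) {u v w : ℕ} (hu : u ∉ vs)
    (hv : v ∉ vs) (hw : w ∉ vs) (huv : u ≠ v) (huw : u ≠ w) (hvw : v ≠ w) :
    IsLeafCode (G ⊔ fromEdgeSet {s(x, u), s(u, v), s(v, w)}) (vs ∪ {u, v, w}) (lv ∪ {w}) := by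
  have hxvs := hT.subset hx
  have hP := isLeafCode_path4 (ne_of_mem_of_not_mem hxvs hu) (ne_of_mem_of_not_mem hxvs hv)
    (ne_of_mem_of_not_mem hxvs hw) huv huw hvw
  have hinter : ∀ y ∈ vs, y ∈ ({x, u, v, w} : Finset ℕ) → y = x := by
    intro y hy hy'
    simp only [mem_insert, mem_singleton] at hy'
    rcases hy' with rfl | rfl | rfl | rfl <;> first | rfl | contradiction
  have := hT.sup hP.mem_of_adj hP.subset hP.perfectCode
    (fun w hw _ => hP.degreeTwoNeighbor w hw) hx (by simp) hinter
  rwa [union_insert_eq_of_mem hxvs, union_insert_eq_of_mem hx] at this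

theorem IsLeafCode.sup_pendantSpider (hT : IsLeafCode G vs lv) (hx : x ∈ lv) {t u : ℕ}
    {mid lf : Fin t → ℕ} (hu : u ∉ vs) (hmid : ∀ i, mid i ∉ vs) (hlf : ∀ i, lf i ∉ vs)
    (hinj : Function.Injective (Sum.elim mid (Sum.elim lf fun _ : Unit => u))) :
    IsLeafCode (G ⊔ pendantSpider x u mid lf) (vs ∪ ({u} ∪ image mid univ ∪ image lf univ))
      (lv ∪ image lf univ) := by
  have hxvs := hT.subset hx
  have hS := PendantSpiderDistinct.of_injective hinj hxvs hu hmid hlf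
  have hinter : ∀ y ∈ vs, y ∈ insert x ({u} ∪ image mid univ ∪ image lf univ) → y = x := by
    intro y hy hy'
    simp only [mem_insert, mem_union, mem_singleton, mem_image, mem_univ, true_and] at hy'
    rcases hy' with rfl | (rfl | ⟨i, rfl⟩) | ⟨i, rfl⟩
    · rfl
    · exact absurd hy hu
    · exact absurd hy (hmid i)
    · exact absurd hy (hlf i)
  have hlf_nbr : ∀ w ∈ insert x (image lf univ), w ≠ x →
      HasDegreeTwoNeighbor (pendantSpider x u mid lf) (insert x (image lf univ)) w := by
    intro w hw hwx
    obtain ⟨i, -, rfl⟩ := mem_image.1 ((mem_insert.1 hw).resolve_left hwx)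
    exact hS.hasDegreeTwoNeighbor_lf i
  have := hT.sup (fun _ _ => mem_of_pendantSpider_adj) (insert_subset_insert _ subset_union_right)
    hS.isPerfectCodeOn hlf_nbr hx (mem_insert_self _ _) hinter
  rwa [union_insert_eq_of_mem hxvs, union_insert_eq_of_mem hx] at this

end Operations

theorem IsLeafCode.of_inF {G : SimpleGraph ℕ} {vs lv : Finset ℕ} (h : InF G vs lv) :
    IsLeafCode G vs lv := by
  induction h with
  | base a b c d hab hac had hbc hbd hcd => exact isLeafCode_path4 hab hac had hbc hbd hcd
  | o1 G vs lv x u v w _ hx hu hv hw huv huw hvw ih => exact ih.sup_path3 hx hu hv hw huv huw hvw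
  | o2 G vs lv x t u mid lf _ _ hx hu hmid hlf hinj ih =>
    exact ih.sup_pendantSpider hx hu hmid hlf hinj

open Classical in
theorem IsLeafCode.two_le_add_sum_adj {G : SimpleGraph ℕ} {vs lv : Finset ℕ} {f : ℕ → ℕ}
    (hT : IsLeafCode G vs lv) (hf : IsRIDFOn G vs f) {w : ℕ} (hw : w ∈ lv) :
    2 ≤ f w + ∑ u ∈ vs.filter (fun u => G.Adj w u), f u := by
  obtain ⟨s, c, -, hcw, hN⟩ := hT.degreeTwoNeighbor w hw
  have hs : s ∈ vs := hT.mem_of_adj ((hN w).2 (Or.inl rfl))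
  have hc : c ∈ vs := hT.mem_of_adj ((hN c).2 (Or.inr rfl)).symm
  exact hf.two_le_add_sum_adj (hT.subset hw) hs hc hcw hN

open Classical in
/-- For a tree T in the family 𝓕, the closed neighborhoods of the vertices of LV(T)
partition V(T), every RIDF f satisfies Σ_{x ∈ N[v]} f(x) ≥ 2 for each v ∈ LV(T), and
hence γ_{rI}(T) ≥ 2 |LV(T)|. -/
theorem closed_nbhd_partition (G : SimpleGraph ℕ) (vs lv : Finset ℕ) (h : InF G vs lv) :
    (∀ v ∈ vs, ∃! w, w ∈ lv ∧ (v = w ∨ G.Adj w v)) ∧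
    (∀ f : ℕ → ℕ, IsRIDFOn G vs f → ∀ w ∈ lv,
      2 ≤ f w + ∑ u ∈ vs.filter (fun u => G.Adj w u), f u) ∧
    2 * lv.card ≤ ridnOn G vs := by
  have hT := IsLeafCode.of_inF h
  exact ⟨hT.perfectCode, fun f hf w hw => hT.two_le_add_sum_adj hf hw,
    le_ridnOn fun f hf => hT.perfectCode.two_mul_card_le_sum hT.subset
      fun w hw => hT.two_le_add_sum_adj hf hw⟩
end
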